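/- arXiv:1201.0978 — 3 statements merged into one kernel-verified Lean document; each statement's English description precedes it below -/
import Mathlib

section
/- Let π: Q̃ ↠ Q be a surjective homomorphism of finitely generated groups, A a finitely generated ℤQ-module, and Ã the ℤQ̃-module obtained by pulling back the action along π. If χ̃: Q̃ → ℝ is a nonzero character that does not vanish on ker π, then Ã is finitely generated over the monoid ring ℤQ̃_{χ̃}. -/
/-!
Pick `t ∈ ker π` with `χ̃ t > 0`. Any preimage `q̃` of `q ∈ Q` can be moved into `Q̃_χ̃` by
multiplying with a power of `t` without changing its image, so the additive span of the
`Q̃_χ̃`-translates of a finite `ℤQ`-generating set of `A` already contains all its `Q`-translates,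
and these span `A` additively.
-/

def fgOver {Q : Type*} [Group Q] (M : Set Q) (A : Type*) [AddCommGroup A]
    [Module (MonoidAlgebra ℤ Q) A] : Prop :=
  ∃ S : Finset A, AddSubgroup.closure
    {x : A | ∃ s ∈ S, ∃ q ∈ M, x = (MonoidAlgebra.single q (1:ℤ) : MonoidAlgebra ℤ Q) • s} = ⊤

open Classical in
noncomputable def vchi {Q : Type*} (χ : Q → ℝ) (lam : MonoidAlgebra ℤ Q) : WithTop ℝ :=
  if h : lam = 0 then ⊤
  else ((lam.coeff.support.inf' (Finsupp.support_nonempty_iff.mpr (fun h' => h (MonoidAlgebra.coeff_eq_zero.mp h'))) χ : ℝ) : WithTop ℝ)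

section Character

variable {G : Type*} [Group G] {χ : G → ℝ} (hχ : ∀ a b, χ (a * b) = χ a + χ b)
include hχ

theorem map_one_of_map_mul_eq_add : χ 1 = 0 := by
  simpa using hχ 1 1

theorem map_inv_of_map_mul_eq_add (g : G) : χ g⁻¹ = -χ g := by
  have := hχ g g⁻¹
  rw [mul_inv_cancel, map_one_of_map_mul_eq_add hχ] at this
  linarith

theorem map_pow_of_map_mul_eq_add (g : G) (n : ℕ) : χ (g ^ n) = n * χ g := by
  induction n with
  | zero => simp [map_one_of_map_mul_eq_add hχ]
  | succ n ih => rw [pow_succ, hχ, ih]; push_cast; ring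

theorem image_nonneg_eq_univ_of_mem_ker {Q : Type*} [Group Q] {π : G →* Q}
    (hπ : Function.Surjective π) {t : G} (ht : t ∈ π.ker) (hχt : χ t ≠ 0) :
    π '' {g | 0 ≤ χ g} = Set.univ := by
  wlog hpos : 0 < χ t generalizing t
  · have hneg : χ t < 0 := lt_of_le_of_ne (not_lt.mp hpos) hχt
    exact this (inv_mem ht) (by rw [map_inv_of_map_mul_eq_add hχ]; exact neg_ne_zero.mpr hχt)
      (by rw [map_inv_of_map_mul_eq_add hχ]; linarith)
  refine Set.eq_univ_of_forall fun p => ?_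
  obtain ⟨g, rfl⟩ := hπ p
  obtain ⟨n, hn⟩ := exists_nat_ge (-χ g / χ t)
  refine ⟨g * t ^ n, ?_, by simp [MonoidHom.mem_ker.mp ht]⟩
  have := (div_le_iff₀ hpos).mp hn
  simp only [Set.mem_ofPred_eq, hχ, map_pow_of_map_mul_eq_add hχ]
  linarith

end Character

open scoped Pointwise in
theorem fgOver_univ_of_finite {Q : Type*} [Group Q] (A : Type*) [AddCommGroup A]
    [Module (MonoidAlgebra ℤ Q) A] [Module.Finite (MonoidAlgebra ℤ Q) A] :
    fgOver (Set.univ : Set Q) A := by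
  obtain ⟨S, hS⟩ := Module.finite_def.mp ‹Module.Finite (MonoidAlgebra ℤ Q) A›
  refine ⟨S, top_unique fun a _ => ?_⟩
  have ha : a ∈ Submodule.span ℤ (Set.range (MonoidAlgebra.basis Q ℤ) • (S : Set A)) := by
    rw [Submodule.span_smul_of_span_eq_top (MonoidAlgebra.basis Q ℤ).span_eq, hS]
    trivial
  rw [← Submodule.span_int_eq_addSubgroupClosure]
  refine Submodule.span_mono ?_ ha
  rintro _ ⟨_, ⟨q, rfl⟩, s, hs, rfl⟩
  exact ⟨s, hs, q, trivial, rfl⟩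

theorem fgOver_comap {G Q : Type*} [Group G] [Group Q] (π : G →* Q) {M : Set G} {N : Set Q}
    (hMN : N ⊆ π '' M) (A : Type*) [AddCommGroup A] [Module (MonoidAlgebra ℤ Q) A]
    (hN : fgOver N A) :
    @fgOver G _ M A _ (Module.compHom A (MonoidAlgebra.mapDomainRingHom ℤ π)) := by
  let _ : Module (MonoidAlgebra ℤ G) A := Module.compHom A (MonoidAlgebra.mapDomainRingHom ℤ π)
  obtain ⟨S, hS⟩ := hN
  refine ⟨S, top_unique (hS.symm.le.trans (AddSubgroup.closure_mono ?_))⟩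
  rintro _ ⟨s, hs, _, hp, rfl⟩
  obtain ⟨g, hg, rfl⟩ := hMN hp
  refine ⟨s, hs, g, hg, ?_⟩
  show _ = MonoidAlgebra.mapDomainRingHom ℤ π (MonoidAlgebra.single g 1) • s
  simp [MonoidAlgebra.mapDomainRingHom_apply]

theorem stmt5_general {Qt Q : Type*} [Group Qt] [Group Q]
    (π : Qt →* Q) (hπ : Function.Surjective π)
    (A : Type*) [AddCommGroup A] [Module (MonoidAlgebra ℤ Q) A]
    [Module.Finite (MonoidAlgebra ℤ Q) A]
    (χt : Qt → ℝ) (hhom : ∀ a b : Qt, χt (a * b) = χt a + χt b)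
    (hker : ∃ t ∈ π.ker, χt t ≠ 0) :
    @fgOver Qt _ {q : Qt | 0 ≤ χt q} A _
      (Module.compHom A (MonoidAlgebra.mapDomainRingHom ℤ π)) := by
  obtain ⟨t, ht, hχt⟩ := hker
  exact fgOver_comap π (image_nonneg_eq_univ_of_mem_ker hhom hπ ht hχt).ge A
    (fgOver_univ_of_finite A)

theorem stmt5 {Qt Q : Type*} [Group Qt] [Group Q]
    (hQt : Group.FG Qt) (hQ : Group.FG Q)
    (π : Qt →* Q) (hπ : Function.Surjective π)
    (A : Type*) [AddCommGroup A] [Module (MonoidAlgebra ℤ Q) A]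
    [Module.Finite (MonoidAlgebra ℤ Q) A]
    (χt : Qt → ℝ) (hhom : ∀ a b : Qt, χt (a * b) = χt a + χt b) (hne : χt ≠ 0)
    (hker : ∃ t ∈ π.ker, χt t ≠ 0) :
    @fgOver Qt _ {q : Qt | 0 ≤ χt q} A _
      (Module.compHom A (MonoidAlgebra.mapDomainRingHom ℤ π)) :=
  stmt5_general π hπ A χt hhom hker
end

section
/- Let π: Q̃ ↠ Q be surjective, χ: Q → ℝ nonzero, and χ̃ = χ ∘ π. Then a finitely generated ℤQ-module A is finitely generated over ℤQ_χ if and only if the pulled-back module Ã is finitely generated over ℤQ̃_{χ̃}. -/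
section PullBack

variable {Qt Q : Type*} [Group Qt] [Group Q] (π : Qt →* Q)
  {A : Type*} [AddCommGroup A] [Module (MonoidAlgebra ℤ Q) A]

theorem single_smul_compHom_mapDomain (qt : Qt) (a : A) :
    letI := Module.compHom A (MonoidAlgebra.mapDomainRingHom ℤ π)
    (MonoidAlgebra.single qt (1 : ℤ) : MonoidAlgebra ℤ Qt) • a =
      (MonoidAlgebra.single (π qt) (1 : ℤ) : MonoidAlgebra ℤ Q) • a :=
  congrArg (· • a) (MonoidAlgebra.mapDomain_single (f := π) (r := (1 : ℤ)))

theorem fgOver_preimage_iff (hπ : Function.Surjective π) (M : Set Q) :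
    fgOver M A ↔
      @fgOver Qt _ (π ⁻¹' M) A _ (Module.compHom A (MonoidAlgebra.mapDomainRingHom ℤ π)) := by
  let := Module.compHom A (MonoidAlgebra.mapDomainRingHom ℤ π)
  refine exists_congr fun S => ?_
  suffices generators_eq :
      {x : A | ∃ s ∈ S, ∃ q ∈ M, x = (MonoidAlgebra.single q (1 : ℤ) : MonoidAlgebra ℤ Q) • s} =
        {x : A | ∃ s ∈ S, ∃ q ∈ π ⁻¹' M,
          x = (MonoidAlgebra.single q (1 : ℤ) : MonoidAlgebra ℤ Qt) • s} by
    rw [generators_eq]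
  ext x
  constructor
  · rintro ⟨s, hs, q, hq, rfl⟩
    obtain ⟨qt, rfl⟩ := hπ q
    exact ⟨s, hs, qt, hq, (single_smul_compHom_mapDomain π qt s).symm⟩
  · rintro ⟨s, hs, qt, hqt, rfl⟩
    exact ⟨s, hs, π qt, hqt, single_smul_compHom_mapDomain π qt s⟩

end PullBack

theorem stmt6_general {Qt Q : Type*} [Group Qt] [Group Q]
    (π : Qt →* Q) (hπ : Function.Surjective π)
    (A : Type*) [AddCommGroup A] [Module (MonoidAlgebra ℤ Q) A]
    (χ : Q → ℝ) :
    fgOver {q : Q | 0 ≤ χ q} A ↔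
      @fgOver Qt _ {q : Qt | 0 ≤ χ (π q)} A _
        (Module.compHom A (MonoidAlgebra.mapDomainRingHom ℤ π)) :=
  fgOver_preimage_iff π hπ {q : Q | 0 ≤ χ q}

theorem stmt6 {Qt Q : Type*} [Group Qt] [Group Q]
    (hQt : Group.FG Qt) (hQ : Group.FG Q)
    (π : Qt →* Q) (hπ : Function.Surjective π)
    (A : Type*) [AddCommGroup A] [Module (MonoidAlgebra ℤ Q) A]
    [Module.Finite (MonoidAlgebra ℤ Q) A]
    (χ : Q → ℝ) (hhom : ∀ a b : Q, χ (a * b) = χ a + χ b) (hne : χ ≠ 0) :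
    fgOver {q : Q | 0 ≤ χ q} A ↔
      @fgOver Qt _ {q : Qt | 0 ≤ χ (π q)} A _
        (Module.compHom A (MonoidAlgebra.mapDomainRingHom ℤ π)) :=
  stmt6_general π hπ A χ
end

section
/- If the group ring ℤQ has no zero-divisors, then for every character χ: Q → ℝ and all λ, μ ∈ ℤQ, the naive valuation satisfies v_χ(λ·μ) = v_χ(λ) + v_χ(μ). -/
namespace MonoidAlgebra

variable {R Q : Type*} {χ : Q → ℝ} {c m n : ℝ} {q : Q}

section Semiring

variable [Semiring R] {f g : MonoidAlgebra R Q}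

noncomputable def levelPart (χ : Q → ℝ) (c : ℝ) (f : MonoidAlgebra R Q) : MonoidAlgebra R Q :=
  ofCoeff (f.coeff.filter (χ · = c))

lemma coeff_levelPart_of_eq (h : χ q = c) : (levelPart χ c f).coeff q = f.coeff q :=
  Finsupp.filter_apply_pos _ _ h

lemma mem_support_levelPart :
    q ∈ (levelPart χ c f).coeff.support ↔ q ∈ f.coeff.support ∧ χ q = c :=
  Finset.mem_filter

lemma exists_isLeast_image_support (hf : f ≠ 0) : ∃ m, IsLeast (χ '' f.coeff.support) m := by
  have hne : f.coeff.support.Nonempty := by simpa using hf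
  obtain ⟨a, ha, he⟩ := Finset.exists_mem_eq_inf' hne χ
  exact ⟨_, ⟨a, ha, he.symm⟩, Set.forall_mem_image.2 fun q hq ↦ Finset.inf'_le χ hq⟩

lemma exists_mem_support_mul_eq_add [Mul Q] (hχ : ∀ a b, χ (a * b) = χ a + χ b)
    (hq : q ∈ (f * g).coeff.support) :
    ∃ a ∈ f.coeff.support, ∃ b ∈ g.coeff.support, χ q = χ a + χ b := by
  classical
  obtain ⟨a, ha, b, hb, rfl⟩ := Finset.mem_mul.mp (support_coeff_mul_subset f g hq)
  exact ⟨a, ha, b, hb, hχ a b⟩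

end Semiring

section Ring

variable [Ring R] {f g : MonoidAlgebra R Q}

lemma mem_support_sub_levelPart :
    q ∈ (f - levelPart χ c f).coeff.support ↔ q ∈ f.coeff.support ∧ χ q ≠ c := by
  by_cases h : χ q = c <;> simp [levelPart, h]

variable [Mul Q]

lemma coeff_mul_eq_coeff_mul_levelPart (hχ : ∀ a b, χ (a * b) = χ a + χ b)
    (hf : m ∈ lowerBounds (χ '' f.coeff.support)) (hg : n ∈ lowerBounds (χ '' g.coeff.support))
    (hq : χ q = m + n) :
    (f * g).coeff q = (levelPart χ m f * levelPart χ n g).coeff q := by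
  set f₀ := levelPart χ m f
  set g₀ := levelPart χ n g
  have hleft : q ∉ ((f - f₀) * g).coeff.support := fun hq' ↦ by
    obtain ⟨a, ha, b, hb, hab⟩ := exists_mem_support_mul_eq_add hχ hq'
    rw [mem_support_sub_levelPart] at ha
    have := (hf ⟨a, ha.1, rfl⟩).lt_of_ne' ha.2
    have := hg ⟨b, hb, rfl⟩
    linarith
  have hright : q ∉ (f₀ * (g - g₀)).coeff.support := fun hq' ↦ by
    obtain ⟨a, ha, b, hb, hab⟩ := exists_mem_support_mul_eq_add hχ hq'
    rw [mem_support_levelPart] at ha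
    rw [mem_support_sub_levelPart] at hb
    have := (hg ⟨b, hb.1, rfl⟩).lt_of_ne' hb.2
    linarith
  have hsplit : f * g = f₀ * g₀ + ((f - f₀) * g + f₀ * (g - g₀)) := by
    rw [sub_mul, mul_sub]; abel
  rw [Finsupp.notMem_support_iff] at hleft hright
  rw [hsplit, coeff_add, coeff_add, Finsupp.add_apply, Finsupp.add_apply, hleft, hright,
    add_zero, add_zero]

theorem isLeast_image_support_mul [NoZeroDivisors (MonoidAlgebra R Q)]
    (hχ : ∀ a b, χ (a * b) = χ a + χ b)
    (hf : IsLeast (χ '' f.coeff.support) m) (hg : IsLeast (χ '' g.coeff.support) n) :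
    IsLeast (χ '' (f * g).coeff.support) (m + n) := by
  refine ⟨?_, Set.forall_mem_image.2 fun q hq ↦ ?_⟩
  · obtain ⟨a, ha, rfl⟩ := hf.1
    obtain ⟨b, hb, rfl⟩ := hg.1
    have hf₀ : levelPart χ (χ a) f ≠ 0 := fun h ↦ by
      simpa [h] using (mem_support_levelPart (χ := χ) (c := χ a)).2 ⟨ha, rfl⟩
    have hg₀ : levelPart χ (χ b) g ≠ 0 := fun h ↦ by
      simpa [h] using (mem_support_levelPart (χ := χ) (c := χ b)).2 ⟨hb, rfl⟩
    obtain ⟨q, hq⟩ := Finsupp.support_nonempty_iff.2 (coeff_eq_zero.not.2 (mul_ne_zero hf₀ hg₀))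
    obtain ⟨a', ha', b', hb', hq'⟩ := exists_mem_support_mul_eq_add hχ hq
    rw [mem_support_levelPart] at ha' hb'
    have hχq : χ q = χ a + χ b := by rw [hq', ha'.2, hb'.2]
    refine ⟨q, ?_, hχq⟩
    rw [Finset.mem_coe, Finsupp.mem_support_iff,
      coeff_mul_eq_coeff_mul_levelPart hχ hf.2 hg.2 hχq]
    exact Finsupp.mem_support_iff.1 hq
  · obtain ⟨a, ha, b, hb, hab⟩ := exists_mem_support_mul_eq_add hχ hq
    rw [hab]
    exact add_le_add (hf.2 ⟨a, ha, rfl⟩) (hg.2 ⟨b, hb, rfl⟩)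

end Ring

end MonoidAlgebra

lemma vchi_eq_of_isLeast {Q : Type*} {χ : Q → ℝ} {f : MonoidAlgebra ℤ Q} {m : ℝ}
    (h : IsLeast (χ '' f.coeff.support) m) : vchi χ f = m := by
  obtain ⟨a, ha, rfl⟩ := h.1
  have hf : f ≠ 0 := by rintro rfl; simp at ha
  rw [vchi, dif_neg hf, WithTop.coe_inj]
  exact le_antisymm (Finset.inf'_le χ ha) (Finset.le_inf' _ _ fun q hq ↦ h.2 ⟨q, hq, rfl⟩)

theorem stmt10 {Q : Type*} [Group Q] [NoZeroDivisors (MonoidAlgebra ℤ Q)]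
    (χ : Q → ℝ) (hhom : ∀ a b : Q, χ (a * b) = χ a + χ b)
    (lam mu : MonoidAlgebra ℤ Q) :
    vchi χ (lam * mu) = vchi χ lam + vchi χ mu := by
  rcases eq_or_ne lam 0 with rfl | hlam
  · simp [vchi]
  rcases eq_or_ne mu 0 with rfl | hmu
  · simp [vchi]
  obtain ⟨m, hm⟩ := MonoidAlgebra.exists_isLeast_image_support (χ := χ) hlam
  obtain ⟨n, hn⟩ := MonoidAlgebra.exists_isLeast_image_support (χ := χ) hmu
  rw [vchi_eq_of_isLeast hm, vchi_eq_of_isLeast hn,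
    vchi_eq_of_isLeast (MonoidAlgebra.isLeast_image_support_mul hhom hm hn), WithTop.coe_add]
end
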